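/- Let (X,d) be a proper geodesic metric space and Ω ⊊ X a bounded domain. Define u_∞(x) = inf{ u(x) : u is a locally Lipschitz positive function on Ω, continuous on cl(Ω), satisfying comparison with cones from below, |∇⁻u| ≥ Λ_∞·u in Ω, and u = 1 = max_{cl(Ω)} u on the high ridge M(Ω) }, where Λ_∞ = 1/R_∞, R_∞ = max_{x∈cl(Ω)} d(x,∂Ω), and M(Ω) = { x ∈ Ω : d(x,∂Ω) = R_∞ }. Then u_∞ is continuous on cl(Ω), satisfies 0 < u_∞ ≤ Λ_∞·d(·,∂Ω) in Ω (hence u_∞ = 0 on ∂Ω), u_∞ = 1 on M(Ω), and u_∞ satisfies comparison with cones from below and |∇⁻u_∞| ≥ Λ_∞·u_∞ in Ω. -/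

import Mathlib

open Metric Filter Set Topology

/-- A geodesic space: any two points are joined by an isometric copy of an interval. -/
def IsGeodesicSpace (X : Type*) [MetricSpace X] : Prop :=
  ∀ x y : X, ∃ γ : ℝ → X, γ 0 = x ∧ γ (dist x y) = y ∧ ∀ s t : ℝ, dist (γ s) (γ t) = |s - t|

/-- The subslope `|∇⁻ u|(x) = limsup_{y→x} max{u(x)-u(y),0}/d(x,y)`. -/
noncomputable def mSubslope {X : Type*} [MetricSpace X] (u : X → ℝ) (x : X) : ℝ :=
  Filter.limsup (fun y => max (u x - u y) 0 / dist x y) (𝓝[≠] x)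

/-- The slope `|∇ u|(x) = limsup_{y→x} |u(y)-u(x)|/d(x,y)`. -/
noncomputable def mSlope {X : Type*} [MetricSpace X] (u : X → ℝ) (x : X) : ℝ :=
  Filter.limsup (fun y => |u y - u x| / dist x y) (𝓝[≠] x)

/-- Comparison with cones from below in `Ω`: for every open `O` compactly contained in `Ω`,
apex `xhat ∈ Ω \ O`, `a ∈ ℝ`, `κ ≤ 0`, if `u ≥ a + κ d(xhat,·)` on `∂O` then the same holds on
the closure of `O`. -/
def CompCones {X : Type*} [MetricSpace X] (Ω : Set X) (u : X → ℝ) : Prop :=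
  ∀ O : Set X, IsOpen O → IsCompact (closure O) → closure O ⊆ Ω →
    ∀ xhat ∈ Ω \ O, ∀ a κ : ℝ, κ ≤ 0 →
      (∀ z ∈ frontier O, a + κ * dist xhat z ≤ u z) →
      ∀ z ∈ closure O, a + κ * dist xhat z ≤ u z

/-- Locally Lipschitz on a set. -/
def LocLipOn {X : Type*} [MetricSpace X] (s : Set X) (u : X → ℝ) : Prop :=
  ∀ x ∈ s, ∃ K : NNReal, ∃ t ∈ 𝓝[s] x, LipschitzOnWith K u t


/-!
The distance function `Λ d(·, ∂Ω)` is itself admissible, so `0 ≤ u_∞ ≤ Λ d(·, ∂Ω)`; this gives the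
boundary values and continuity at `∂Ω`. Comparison with cones from below passes to infima. With the
apex at the centre of a ball it gives the Harnack inequality `u z ≥ u x (1 - d(x, z) / ρ)`, hence
interior Lipschitz bounds that are uniform over the admissible functions (all of which are `≤ 1`),
and a strong minimum principle: `u_∞ > 0` on the connected set `Ω` because `u_∞ = 1` on the high
ridge. Finally, `|∇⁻u|(x) ≥ s > 0` together with comparison with cones forces `u` to drop by `s r`
somewhere on every small sphere about `x`; applied to an admissible `u` with `u x < u_∞ x + ε r`,
this gives the same drop for `u_∞` up to `ε r`.
-/

namespace IsGeodesicSpace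

variable {X : Type*} [MetricSpace X]

theorem exists_dist_eq (hgeo : IsGeodesicSpace X) (x : X) {r : ℝ} (hr : 0 ≤ r) :
    ∃ y, dist x y = r := by
  obtain ⟨γ, h0, -, hγ⟩ := hgeo x x
  exact ⟨γ r, by rw [← h0, hγ, zero_sub, abs_neg, abs_of_nonneg hr]⟩

theorem exists_dist_eq_of_le (hgeo : IsGeodesicSpace X) {x y : X} {r : ℝ} (hr₀ : 0 ≤ r)
    (hr : r ≤ dist x y) : ∃ z, dist x z = r ∧ dist z y = dist x y - r := by
  obtain ⟨γ, h0, h1, hγ⟩ := hgeo x y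
  refine ⟨γ r, by rw [← h0, hγ, zero_sub, abs_neg, abs_of_nonneg hr₀], ?_⟩
  calc dist (γ r) y = dist (γ r) (γ (dist x y)) := by rw [h1]
    _ = dist x y - r := by rw [hγ, abs_of_nonpos (sub_nonpos.2 hr), neg_sub]

theorem exists_mem_frontier (hgeo : IsGeodesicSpace X) {O : Set X} {x y : X} (hx : x ∈ O)
    (hy : y ∉ O) : ∃ z ∈ frontier O, dist x z + dist z y = dist x y := by
  obtain ⟨γ, h0, h1, hγ⟩ := hgeo x y
  set L := dist x y
  have : PreconnectedSpace (Icc 0 L) :=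
    isPreconnected_iff_preconnectedSpace.1 isPreconnected_Icc
  have hcont : Continuous fun t : Icc 0 L => γ t :=
    (Isometry.of_dist_eq fun s t => by rw [hγ, Real.dist_eq]).continuous.comp
      continuous_subtype_val
  obtain ⟨⟨t, ht₀, htL⟩, ht⟩ := (nonempty_frontier_iff (s := (fun t : Icc 0 L => γ t) ⁻¹' O)).2
    ⟨⟨⟨0, le_rfl, dist_nonneg⟩, by simpa [h0] using hx⟩,
      (ne_univ_iff_exists_notMem _).2 ⟨⟨L, dist_nonneg, le_rfl⟩, by simpa [h1] using hy⟩⟩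
  refine ⟨γ t, hcont.frontier_preimage_subset O ht, ?_⟩
  calc dist x (γ t) + dist (γ t) y = dist (γ 0) (γ t) + dist (γ t) (γ L) := by rw [h0, h1]
    _ = L := by rw [hγ, hγ, abs_of_nonpos (by linarith), abs_of_nonpos (by linarith)]; ring

theorem frontier_nonempty (hgeo : IsGeodesicSpace X) {Ω : Set X} {x : X} (hx : x ∈ Ω)
    (hΩ : Ω ≠ univ) : (frontier Ω).Nonempty :=
  let ⟨_, hy⟩ := (ne_univ_iff_exists_notMem Ω).1 hΩ
  let ⟨z, hz, _⟩ := hgeo.exists_mem_frontier hx hy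
  ⟨z, hz⟩

theorem ball_infDist_frontier_subset (hgeo : IsGeodesicSpace X) {Ω : Set X} {x : X}
    (hx : x ∈ Ω) : ball x (infDist x (frontier Ω)) ⊆ Ω := by
  intro y hy
  by_contra hyΩ
  obtain ⟨z, hz, hxz⟩ := hgeo.exists_mem_frontier hx hyΩ
  linarith [infDist_le_dist_of_mem (x := x) hz, mem_ball'.1 hy, dist_nonneg (x := z) (y := y)]

theorem neBot_nhdsWithin_compl (hgeo : IsGeodesicSpace X) (x : X) : (𝓝[≠] x).NeBot := by
  refine mem_closure_iff_nhdsWithin_neBot.1 (Metric.mem_closure_iff.2 fun ε hε => ?_)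
  obtain ⟨y, hy⟩ := hgeo.exists_dist_eq x (half_pos hε).le
  refine ⟨y, fun h : y = x => ?_, by linarith⟩
  rw [h, dist_self] at hy
  linarith

end IsGeodesicSpace

theorem infDist_frontier_pos {X : Type*} [MetricSpace X] {Ω : Set X} (hΩo : IsOpen Ω)
    (hfr : (frontier Ω).Nonempty) {x : X} (hx : x ∈ Ω) : 0 < infDist x (frontier Ω) :=
  (isClosed_frontier.notMem_iff_infDist_pos hfr).1 fun h => (hΩo.frontier_eq ▸ h).2 hx

section Subslope

variable {X : Type*} [MetricSpace X] {u : X → ℝ} {x : X} {C : ℝ}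

theorem eventually_subslope_quotient_le (hC : 0 ≤ C)
    (h : ∀ᶠ y in 𝓝 x, u x - u y ≤ C * dist x y) :
    ∀ᶠ y in 𝓝[≠] x, max (u x - u y) 0 / dist x y ≤ C := by
  filter_upwards [eventually_nhdsWithin_of_eventually_nhds h, self_mem_nhdsWithin] with y hy hyx
  rw [div_le_iff₀ (dist_pos.2 (Ne.symm hyx))]
  exact max_le hy (by positivity)

theorem mSubslope_le (hx : (𝓝[≠] x).NeBot) (hC : 0 ≤ C)
    (h : ∀ᶠ y in 𝓝 x, u x - u y ≤ C * dist x y) : mSubslope u x ≤ C :=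
  limsup_le_of_le (isCoboundedUnder_le_of_le _ fun y => by positivity)
    (eventually_subslope_quotient_le hC h)

theorem le_mSubslope {c : ℝ} (hC : 0 ≤ C) (hbdd : ∀ᶠ y in 𝓝 x, u x - u y ≤ C * dist x y)
    (h : ∀ ε > 0, ∃ y ≠ x, dist x y < ε ∧ c * dist x y ≤ u x - u y) : c ≤ mSubslope u x := by
  refine le_limsup_of_frequently_le (frequently_iff.2 fun hU => ?_)
    ⟨C, eventually_map.2 (eventually_subslope_quotient_le hC hbdd)⟩
  obtain ⟨ε, hε, hU⟩ := mem_nhdsWithin_iff.1 hU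
  obtain ⟨y, hyx, hxy, hy⟩ := h ε hε
  refine ⟨y, hU ⟨mem_ball'.2 hxy, hyx⟩, ?_⟩
  rw [le_div_iff₀ (dist_pos.2 (Ne.symm hyx))]
  exact hy.trans (le_max_left _ _)

end Subslope

namespace CompCones

variable {X : Type*} [MetricSpace X] [ProperSpace X] {Ω : Set X} {u : X → ℝ}

theorem add_mul_dist_le (hcc : CompCones Ω u) {x z : X} {r κ : ℝ} (hx : x ∈ Ω)
    (hball : closedBall x r ⊆ Ω) (hκ : κ ≤ 0) (hsph : ∀ y, dist x y = r → u x + κ * r ≤ u y)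
    (hz : dist x z < r) : u x + κ * dist x z ≤ u z := by
  rcases eq_or_ne z x with rfl | hzx
  · simp
  have hO : IsOpen (ball x r \ {x}) := isOpen_ball.sdiff isClosed_singleton
  have hcl : closure (ball x r \ {x}) ⊆ closedBall x r :=
    (closure_mono sdiff_subset).trans closure_ball_subset_closedBall
  refine hcc _ hO ((isCompact_closedBall x r).of_isClosed_subset isClosed_closure hcl)
    (hcl.trans hball) x ⟨hx, fun h => h.2 rfl⟩ (u x) κ hκ (fun y hy => ?_) z
    (subset_closure ⟨mem_ball'.2 hz, hzx⟩)
  rw [hO.frontier_eq] at hy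
  rcases eq_or_ne y x with rfl | hyx
  · simp
  have hxy : dist x y = r := le_antisymm (mem_closedBall'.1 (hcl hy.1))
    (not_lt.1 fun h => hy.2 ⟨mem_ball'.2 h, hyx⟩)
  rw [hxy]
  exact hsph y hxy

/-- Harnack inequality. -/
theorem mul_one_sub_div_le (hnn : ∀ y ∈ Ω, 0 ≤ u y) (hcc : CompCones Ω u) {x z : X} {ρ : ℝ}
    (hx : x ∈ Ω) (hball : closedBall x ρ ⊆ Ω) (hz : dist x z < ρ) :
    u x * (1 - dist x z / ρ) ≤ u z := by
  have hρ : 0 < ρ := dist_nonneg.trans_lt hz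
  have hcone := hcc.add_mul_dist_le hx hball (neg_nonpos.2 (div_nonneg (hnn x hx) hρ.le))
    (fun y hy => ?_) hz
  · calc u x * (1 - dist x z / ρ) = u x + -(u x / ρ) * dist x z := by field_simp; ring
      _ ≤ u z := hcone
  · rw [show u x + -(u x / ρ) * ρ = 0 by field_simp; ring]
    exact hnn y (hball (mem_closedBall'.2 hy.le))

theorem half_le_of_dist_lt (hgeo : IsGeodesicSpace X) (hnn : ∀ y ∈ Ω, 0 ≤ u y)
    (hcc : CompCones Ω u) {x y : X} (hx : x ∈ Ω)
    (hxy : dist x y < infDist x (frontier Ω) / 4) : u x / 2 ≤ u y ∧ u y / 2 ≤ u x := by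
  set r := infDist x (frontier Ω)
  have hr : 0 < r := by linarith [dist_nonneg (x := x) (y := y)]
  have hsub := hgeo.ball_infDist_frontier_subset hx
  have harnack : ∀ a b, a ∈ Ω → closedBall a (r / 2) ⊆ Ω → dist a b < r / 4 → u a / 2 ≤ u b := by
    intro a b ha hball hab
    have hq : 1 / 2 ≤ 1 - dist a b / (r / 2) := by
      rw [le_sub_comm, div_le_iff₀ (by positivity)]
      linarith
    calc u a / 2 = u a * (1 / 2) := by ring
      _ ≤ u a * (1 - dist a b / (r / 2)) := mul_le_mul_of_nonneg_left hq (hnn a ha)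
      _ ≤ u b := hcc.mul_one_sub_div_le hnn ha hball (by linarith)
  refine ⟨harnack x y hx ((closedBall_subset_ball (by linarith)).trans hsub) hxy,
    harnack y x (hsub (mem_ball'.2 (by linarith))) ((closedBall_subset_ball' ?_).trans hsub)
      (by rwa [dist_comm])⟩
  rw [dist_comm]
  linarith

theorem forall_pos_of_pos (hgeo : IsGeodesicSpace X) (hΩo : IsOpen Ω) (hΩc : IsPreconnected Ω)
    (hfr : (frontier Ω).Nonempty) (hnn : ∀ y ∈ Ω, 0 ≤ u y) (hcc : CompCones Ω u) {x₀ : X}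
    (hx₀ : x₀ ∈ Ω) (h₀ : 0 < u x₀) : ∀ x ∈ Ω, 0 < u x := by
  have hnhds : ∀ x ∈ Ω, ∃ ε > 0, ∀ y ∈ ball x ε, y ∈ Ω ∧ u x / 2 ≤ u y ∧ u y / 2 ≤ u x := by
    intro x hx
    have hr := infDist_frontier_pos hΩo hfr hx
    refine ⟨infDist x (frontier Ω) / 4, by positivity, fun y hy => ⟨?_, ?_⟩⟩
    · exact hgeo.ball_infDist_frontier_subset hx (ball_subset_ball (by linarith) hy)
    · exact hcc.half_le_of_dist_lt hgeo hnn hx (mem_ball'.1 hy)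
  have hpos : IsOpen {x | x ∈ Ω ∧ 0 < u x} := Metric.isOpen_iff.2 fun x ⟨hx, hux⟩ =>
    let ⟨ε, hε, h⟩ := hnhds x hx
    ⟨ε, hε, fun y hy => ⟨(h y hy).1, by linarith [(h y hy).2.1]⟩⟩
  have hzero : IsOpen {x | x ∈ Ω ∧ u x ≤ 0} := Metric.isOpen_iff.2 fun x ⟨hx, hux⟩ =>
    let ⟨ε, hε, h⟩ := hnhds x hx
    ⟨ε, hε, fun y hy => ⟨(h y hy).1, by linarith [(h y hy).2.2]⟩⟩
  have hΩpos := hΩc.subset_left_of_subset_union hpos hzero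
    (disjoint_left.2 fun x hx hx' => (hx.2.trans_le hx'.2).false)
    (fun x hx => (lt_or_ge 0 (u x)).imp (⟨hx, ·⟩) (⟨hx, ·⟩)) ⟨x₀, hx₀, hx₀, h₀⟩
  exact fun x hx => (hΩpos hx).2

theorem sub_le_two_div_mul_dist (hgeo : IsGeodesicSpace X) (hnn : ∀ y ∈ Ω, 0 ≤ u y)
    (hle : ∀ y ∈ Ω, u y ≤ 1) (hcc : CompCones Ω u) {x z : X} {δ : ℝ} (hx : x ∈ Ω) (hz : z ∈ Ω)
    (hδ : 0 < δ) (hδx : δ ≤ infDist x (frontier Ω)) : u x - u z ≤ 2 / δ * dist x z := by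
  rcases lt_or_ge (dist x z) (δ / 2) with hd | hd
  · have hball : closedBall x (δ / 2) ⊆ Ω :=
      (closedBall_subset_ball (by linarith)).trans (hgeo.ball_infDist_frontier_subset hx)
    have hharnack := hcc.mul_one_sub_div_le hnn hx hball hd
    have hq : u x * (2 / δ * dist x z) ≤ 2 / δ * dist x z :=
      mul_le_of_le_one_left (by positivity) (hle x hx)
    rw [show dist x z / (δ / 2) = 2 / δ * dist x z by field_simp] at hharnack
    linarith
  · have h1 : 1 ≤ 2 / δ * dist x z := by
      rw [div_mul_eq_mul_div, le_div_iff₀ hδ]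
      linarith
    linarith [hle x hx, hnn z hz]

theorem lipschitzOnWith_ball (hgeo : IsGeodesicSpace X) (hnn : ∀ y ∈ Ω, 0 ≤ u y)
    (hle : ∀ y ∈ Ω, u y ≤ 1) (hcc : CompCones Ω u) {x : X} (hx : x ∈ Ω) :
    LipschitzOnWith (4 / infDist x (frontier Ω)).toNNReal u
      (ball x (infDist x (frontier Ω) / 2)) := by
  set r := infDist x (frontier Ω)
  refine LipschitzOnWith.of_le_add_mul' _ fun a ha b hb => ?_
  have hr : 0 < r := by linarith [mem_ball'.1 ha, dist_nonneg (x := x) (y := a)]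
  have hsub := hgeo.ball_infDist_frontier_subset hx
  have hδa : r / 2 ≤ infDist a (frontier Ω) := by
    linarith [infDist_le_infDist_add_dist (s := frontier Ω) (x := x) (y := a), mem_ball'.1 ha]
  have := hcc.sub_le_two_div_mul_dist hgeo hnn hle (hsub (ball_subset_ball (by linarith) ha))
    (hsub (ball_subset_ball (by linarith) hb)) (by positivity) hδa
  rw [show 2 / (r / 2) = 4 / r by field_simp; norm_num] at this
  linarith

theorem exists_dist_eq_le_sub_of_le_mSubslope (hgeo : IsGeodesicSpace X) (hcc : CompCones Ω u)
    {x : X} {r s : ℝ} (hcont : ContinuousOn u (sphere x r)) (hx : x ∈ Ω) (hs : 0 < s)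
    (hsub : s ≤ mSubslope u x) (hr : 0 < r) (hball : closedBall x r ⊆ Ω) :
    ∃ y, dist x y = r ∧ u y ≤ u x - s * r := by
  -- Otherwise, by compactness of the sphere, a cone of slope `κ > -s` stays below `u` on the
  -- sphere, hence on the ball, and bounds the subslope at `x` by `-κ < s`.
  obtain ⟨y₀, hy₀⟩ := hgeo.exists_dist_eq x hr.le
  obtain ⟨y, hy, hmin⟩ := (isCompact_sphere x r).exists_isMinOn ⟨y₀, mem_sphere'.2 hy₀⟩ hcont
  refine ⟨y, mem_sphere'.1 hy, not_lt.1 fun hlt => ?_⟩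
  set κ := min ((u y - u x) / r) 0
  have hκ : κ ≤ 0 := min_le_right _ _
  have hκs : -s < κ := lt_min (by rw [lt_div_iff₀ hr]; linarith) (by linarith)
  have hκr : κ * r ≤ u y - u x :=
    (mul_le_mul_of_nonneg_right (min_le_left _ _) hr.le).trans_eq (div_mul_cancel₀ _ hr.ne')
  have hcone : ∀ z, dist x z < r → u x - u z ≤ -κ * dist x z := by
    intro z hz
    have := hcc.add_mul_dist_le hx hball hκ (fun w hw => by
      linarith [show u y ≤ u w from hmin (mem_sphere'.2 hw)]) hz
    linarith
  have := mSubslope_le (hgeo.neBot_nhdsWithin_compl x) (neg_nonneg.2 hκ)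
    (eventually_of_mem (ball_mem_nhds x hr) fun z hz => hcone z (mem_ball'.1 hz))
  linarith

end CompCones

section DistanceFunction

variable {X : Type*} [MetricSpace X] {Λ : ℝ}

theorem lipschitzWith_mul_infDist (hΛ : 0 ≤ Λ) (s : Set X) :
    LipschitzWith Λ.toNNReal fun x => Λ * infDist x s :=
  LipschitzWith.of_le_add_mul' Λ fun x y => by
    nlinarith [infDist_le_infDist_add_dist (s := s) (x := x) (y := y)]

theorem compCones_mul_infDist_frontier [ProperSpace X] (hgeo : IsGeodesicSpace X) {Ω : Set X}
    (hΩo : IsOpen Ω) (hfr : (frontier Ω).Nonempty) (hΛ : 0 ≤ Λ) :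
    CompCones Ω fun x => Λ * infDist x (frontier Ω) := by
  intro O hO _ hOΩ apex hapex a κ hκ hbd z hz
  by_cases hzO : z ∈ O
  swap
  · exact hbd z (hO.frontier_eq ▸ ⟨hz, hzO⟩)
  rcases le_or_gt 0 (Λ + κ) with hΛκ | hΛκ
  · -- follow a geodesic from `z` to a nearest point `p` of `∂Ω`; it leaves `O` at some `q`
    obtain ⟨p, hp, hzp⟩ := isClosed_frontier.exists_infDist_eq_dist hfr z
    have hpO : p ∉ O := fun h => (hΩo.frontier_eq ▸ hp).2 (hOΩ (subset_closure h))
    obtain ⟨q, hq, hzq⟩ := hgeo.exists_mem_frontier hzO hpO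
    have hb : a + κ * dist apex q ≤ Λ * infDist q (frontier Ω) := hbd q hq
    have h1 := mul_le_mul_of_nonpos_left (dist_triangle apex z q) hκ
    have h2 := mul_le_mul_of_nonneg_left (infDist_le_dist_of_mem (x := q) hp) hΛ
    have h3 := mul_nonneg hΛκ (dist_nonneg (x := z) (y := q))
    show a + κ * dist apex z ≤ Λ * infDist z (frontier Ω)
    rw [hzp, ← hzq]
    nlinarith
  · -- follow a geodesic from `z` to the apex; it leaves `O` at some `q`
    obtain ⟨q, hq, hzq⟩ := hgeo.exists_mem_frontier hzO hapex.2
    have hb : a + κ * dist q apex ≤ Λ * infDist q (frontier Ω) := dist_comm apex q ▸ hbd q hq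
    have h1 := mul_le_mul_of_nonneg_left
      (infDist_le_infDist_add_dist (s := frontier Ω) (x := q) (y := z)) hΛ
    have h2 := mul_nonpos_of_nonpos_of_nonneg hΛκ.le (dist_nonneg (x := q) (y := z))
    show a + κ * dist apex z ≤ Λ * infDist z (frontier Ω)
    rw [dist_comm apex z, ← hzq, dist_comm z q]
    nlinarith

theorem le_mSubslope_mul_infDist [ProperSpace X] (hgeo : IsGeodesicSpace X) {s : Set X}
    (hs : IsClosed s) (hne : s.Nonempty) (hΛ : 0 ≤ Λ) {x : X} (hx : x ∉ s) :
    Λ ≤ mSubslope (fun z => Λ * infDist z s) x := by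
  refine le_mSubslope hΛ (Eventually.of_forall fun y => ?_) fun ε hε => ?_
  · nlinarith [infDist_le_infDist_add_dist (s := s) (x := x) (y := y)]
  obtain ⟨p, hp, hxp⟩ := hs.exists_infDist_eq_dist hne x
  have hd : 0 < dist x p := hxp ▸ (hs.notMem_iff_infDist_pos hne).1 hx
  obtain ⟨y, hxy, hyp⟩ := hgeo.exists_dist_eq_of_le (r := min (ε / 2) (dist x p))
    (by positivity) (min_le_right _ _)
  have hr : 0 < min (ε / 2) (dist x p) := by positivity
  refine ⟨y, fun h => by rw [h, dist_self] at hxy; linarith, ?_, ?_⟩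
  · linarith [min_le_left (ε / 2) (dist x p)]
  · have := mul_le_mul_of_nonneg_left (hyp ▸ infDist_le_dist_of_mem (x := y) hp) hΛ
    show Λ * dist x y ≤ Λ * infDist x s - Λ * infDist y s
    rw [hxp, hxy]
    linarith

end DistanceFunction

section Infimum

variable {X : Type*} [MetricSpace X] {S : Set (X → ℝ)} {v : X → ℝ}

theorem CompCones.of_isGLB {Ω : Set X} (hS : ∀ u ∈ S, CompCones Ω u)
    (hv : ∀ x ∈ Ω, IsGLB ((fun u => u x) '' S) (v x)) : CompCones Ω v := by
  intro O hO hOc hOΩ apex hapex a κ hκ hbd z hz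
  refine (hv z (hOΩ hz)).2 ?_
  rintro _ ⟨u, hu, rfl⟩
  refine hS u hu O hO hOc hOΩ apex hapex a κ hκ (fun y hy => ?_) z hz
  exact (hbd y hy).trans ((hv y (hOΩ (frontier_subset_closure hy))).1 ⟨u, hu, rfl⟩)

theorem LipschitzOnWith.of_isGLB {K : NNReal} {s : Set X} (hS : ∀ u ∈ S, LipschitzOnWith K u s)
    (hv : ∀ x ∈ s, IsGLB ((fun u => u x) '' S) (v x)) : LipschitzOnWith K v s := by
  refine LipschitzOnWith.of_le_add_mul K fun x hx y hy => ?_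
  have : v x - K * dist x y ≤ v y := (hv y hy).2 <| by
    rintro _ ⟨u, hu, rfl⟩
    linarith [(hv x hx).1 ⟨u, hu, rfl⟩, (hS u hu).le_add_mul hx hy]
  linarith

theorem le_mSubslope_of_isGLB [ProperSpace X] (hgeo : IsGeodesicSpace X) {Ω : Set X}
    {Λ C : ℝ} {x : X} (hΛ : 0 < Λ) (hC : 0 ≤ C) (hx : x ∈ Ω) (hdx : 0 < infDist x (frontier Ω))
    (hcc : ∀ u ∈ S, CompCones Ω u) (hcont : ∀ u ∈ S, ContinuousOn u Ω)
    (hpos : ∀ u ∈ S, 0 < u x) (hsub : ∀ u ∈ S, Λ * u x ≤ mSubslope u x)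
    (hv : ∀ y ∈ Ω, IsGLB ((fun u => u y) '' S) (v y))
    (hbdd : ∀ᶠ y in 𝓝 x, v x - v y ≤ C * dist x y) : Λ * v x ≤ mSubslope v x := by
  refine le_of_forall_sub_le fun ε hε => le_mSubslope hC hbdd fun η hη => ?_
  set r := min (min (η / 2) (infDist x (frontier Ω) / 2)) (1 / Λ)
  have hr : 0 < r := by positivity
  have hrη : r ≤ η / 2 := (min_le_left _ _).trans (min_le_left _ _)
  have hrx : r ≤ infDist x (frontier Ω) / 2 := (min_le_left _ _).trans (min_le_right _ _)
  have hΛr : 0 ≤ 1 - Λ * r := by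
    rw [sub_nonneg, ← le_div_iff₀' hΛ]
    exact min_le_right _ _
  have hball : closedBall x r ⊆ Ω :=
    (closedBall_subset_ball (by linarith)).trans (hgeo.ball_infDist_frontier_subset hx)
  obtain ⟨_, ⟨u, hu, rfl⟩, hvu, huv⟩ :=
    (hv x hx).exists_between (lt_add_of_pos_right (v x) (mul_pos hε hr))
  obtain ⟨y, hxy, huy⟩ := (hcc u hu).exists_dist_eq_le_sub_of_le_mSubslope hgeo
    ((hcont u hu).mono (sphere_subset_closedBall.trans hball)) hx (mul_pos hΛ (hpos u hu))
    (hsub u hu) hr hball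
  have hvy : v y ≤ u y := (hv y (hball (mem_closedBall'.2 hxy.le))).1 ⟨u, hu, rfl⟩
  refine ⟨y, fun h => by rw [h, dist_self] at hxy; linarith, by linarith, ?_⟩
  rw [hxy]
  nlinarith [mul_le_mul_of_nonneg_right huv.le hΛr, mul_nonneg (mul_nonneg hε.le hΛ.le) hr.le]

end Infimum

section Perron

variable {X : Type*} [MetricSpace X]

theorem continuousOn_closure_of_le {Ω : Set X} (hΩo : IsOpen Ω) {v w : X → ℝ}
    (hv : ContinuousOn v Ω) (hw : Continuous w) (hw₀ : ∀ x ∈ frontier Ω, w x = 0)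
    (h₀v : ∀ x ∈ closure Ω, 0 ≤ v x) (hvw : ∀ x ∈ closure Ω, v x ≤ w x) :
    ContinuousOn v (closure Ω) := by
  intro x hx
  by_cases hxΩ : x ∈ Ω
  · exact (hv.continuousAt (hΩo.mem_nhds hxΩ)).continuousWithinAt
  have hxf : x ∈ frontier Ω := hΩo.frontier_eq ▸ ⟨hx, hxΩ⟩
  have hvx : v x = 0 := le_antisymm (hw₀ x hxf ▸ hvw x hx) (h₀v x hx)
  rw [ContinuousWithinAt, hvx]
  refine tendsto_of_tendsto_of_tendsto_of_le_of_le' tendsto_const_nhds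
    (hw₀ x hxf ▸ (hw.tendsto x).mono_left nhdsWithin_le_nhds) ?_ ?_ <;>
    filter_upwards [self_mem_nhdsWithin]
  exacts [h₀v, hvw]

theorem exists_isGreatest_infDist_frontier [ProperSpace X] {Ω : Set X} (hΩo : IsOpen Ω)
    (hΩb : Bornology.IsBounded Ω) (hfr : (frontier Ω).Nonempty) {x₀ : X} (hx₀ : x₀ ∈ Ω) :
    ∃ x ∈ Ω, IsGreatest ((fun y => infDist y (frontier Ω)) '' closure Ω)
      (infDist x (frontier Ω)) := by
  obtain ⟨_, ⟨x, hx, rfl⟩, hmax⟩ :=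
    (hΩb.isCompact_closure.image (continuous_infDist_pt _)).exists_isGreatest
      ⟨_, x₀, subset_closure hx₀, rfl⟩
  refine ⟨x, by_contra fun hxΩ => ?_, ⟨x, hx, rfl⟩, hmax⟩
  have : infDist x₀ (frontier Ω) ≤ infDist x (frontier Ω) := hmax ⟨x₀, subset_closure hx₀, rfl⟩
  rw [infDist_zero_of_mem (x := x) (hΩo.frontier_eq ▸ ⟨hx, hxΩ⟩)] at this
  exact (infDist_frontier_pos hΩo hfr hx₀).not_ge this

theorem supersolution_of_isGLB [ProperSpace X] (hgeo : IsGeodesicSpace X) {Ω : Set X}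
    (hΩo : IsOpen Ω) (hΩc : IsPreconnected Ω) (hfr : (frontier Ω).Nonempty) {Λ : ℝ}
    (hΛ : 0 < Λ) {S : Set (X → ℝ)} {v : X → ℝ} (hpos : ∀ u ∈ S, ∀ x ∈ Ω, 0 < u x)
    (hle : ∀ u ∈ S, ∀ x ∈ Ω, u x ≤ 1) (hcont : ∀ u ∈ S, ContinuousOn u Ω)
    (hcc : ∀ u ∈ S, CompCones Ω u) (hsub : ∀ u ∈ S, ∀ x ∈ Ω, Λ * u x ≤ mSubslope u x)
    (hv : ∀ x ∈ Ω, IsGLB ((fun u => u x) '' S) (v x)) {x₀ : X} (hx₀ : x₀ ∈ Ω)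
    (hv₀ : 0 < v x₀) :
    ContinuousOn v Ω ∧ (∀ x ∈ Ω, 0 < v x) ∧ CompCones Ω v ∧
      ∀ x ∈ Ω, Λ * v x ≤ mSubslope v x := by
  have hnn : ∀ u ∈ S, ∀ x ∈ Ω, 0 ≤ u x := fun u hu x hx => (hpos u hu x hx).le
  have hvnn : ∀ x ∈ Ω, 0 ≤ v x := fun x hx =>
    (hv x hx).2 (by rintro _ ⟨u, hu, rfl⟩; exact hnn u hu x hx)
  have hccv : CompCones Ω v := CompCones.of_isGLB hcc hv
  have hr : ∀ x ∈ Ω, 0 < infDist x (frontier Ω) / 2 := fun x hx =>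
    half_pos (infDist_frontier_pos hΩo hfr hx)
  have hlip : ∀ x ∈ Ω, LipschitzOnWith (4 / infDist x (frontier Ω)).toNNReal v
      (ball x (infDist x (frontier Ω) / 2)) := fun x hx =>
    LipschitzOnWith.of_isGLB (fun u hu => (hcc u hu).lipschitzOnWith_ball hgeo (hnn u hu)
      (hle u hu) hx) fun y hy => hv y (hgeo.ball_infDist_frontier_subset hx
        (ball_subset_ball (half_le_self infDist_nonneg) hy))
  have hbdd : ∀ x ∈ Ω, ∀ᶠ y in 𝓝 x,
      v x - v y ≤ (4 / infDist x (frontier Ω)).toNNReal * dist x y := fun x hx => by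
    filter_upwards [ball_mem_nhds x (hr x hx)] with y hy
    linarith [(hlip x hx).le_add_mul (mem_ball_self (hr x hx)) hy]
  refine ⟨fun x hx => ((hlip x hx).continuousOn.continuousAt
      (ball_mem_nhds x (hr x hx))).continuousWithinAt,
    hccv.forall_pos_of_pos hgeo hΩo hΩc hfr hvnn hx₀ hv₀, hccv, fun x hx => ?_⟩
  exact le_mSubslope_of_isGLB hgeo hΛ NNReal.zero_le_coe hx (infDist_frontier_pos hΩo hfr hx)
    hcc hcont (fun u hu => hpos u hu x hx) (fun u hu => hsub u hu x hx) hv (hbdd x hx)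

theorem mul_infDist_frontier_admissible [ProperSpace X] (hgeo : IsGeodesicSpace X) {Ω : Set X}
    (hΩo : IsOpen Ω) (hfr : (frontier Ω).Nonempty) {Λ R : ℝ} (hΛ : 0 < Λ) (hΛR : Λ * R = 1)
    (hR : ∀ x ∈ closure Ω, infDist x (frontier Ω) ≤ R) :
    (fun x => Λ * infDist x (frontier Ω)) ∈ {u : X → ℝ | LocLipOn Ω u ∧ (∀ x ∈ Ω, 0 < u x) ∧
      ContinuousOn u (closure Ω) ∧ CompCones Ω u ∧ (∀ x ∈ Ω, Λ * u x ≤ mSubslope u x) ∧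
      (∀ x ∈ {x ∈ Ω | infDist x (frontier Ω) = R}, u x = 1) ∧ ∀ x ∈ closure Ω, u x ≤ 1} := by
  have hle : ∀ x ∈ closure Ω, Λ * infDist x (frontier Ω) ≤ 1 := fun x hx =>
    hΛR ▸ mul_le_mul_of_nonneg_left (hR x hx) hΛ.le
  refine ⟨fun _ _ => ⟨_, univ, univ_mem, (lipschitzWith_mul_infDist hΛ.le _).lipschitzOnWith⟩,
    fun x hx => mul_pos hΛ (infDist_frontier_pos hΩo hfr hx),
    (lipschitzWith_mul_infDist hΛ.le _).continuous.continuousOn,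
    compCones_mul_infDist_frontier hgeo hΩo hfr hΛ.le, fun x hx => ?_,
    fun x hx => by simp only [hx.2, hΛR], hle⟩
  exact (mul_le_of_le_one_right hΛ.le (hle x (subset_closure hx))).trans
    (le_mSubslope_mul_infDist hgeo isClosed_frontier hfr hΛ.le
      fun h => (hΩo.frontier_eq ▸ h).2 hx)

theorem perron_infimum [ProperSpace X] (hgeo : IsGeodesicSpace X) {Ω : Set X} (hΩo : IsOpen Ω)
    (hΩc : IsPreconnected Ω) (hfr : (frontier Ω).Nonempty) {Λ : ℝ} (hΛ : 0 < Λ)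
    {S : Set (X → ℝ)} {T : Set X} {v : X → ℝ} (hv : ∀ x, v x = sInf ((fun u => u x) '' S))
    (hw : (fun x => Λ * infDist x (frontier Ω)) ∈ S) (hpos : ∀ u ∈ S, ∀ x ∈ Ω, 0 < u x)
    (hle : ∀ u ∈ S, ∀ x ∈ Ω, u x ≤ 1) (hcont : ∀ u ∈ S, ContinuousOn u (closure Ω))
    (hcc : ∀ u ∈ S, CompCones Ω u) (hsub : ∀ u ∈ S, ∀ x ∈ Ω, Λ * u x ≤ mSubslope u x)
    (hT : ∀ u ∈ S, ∀ x ∈ T, u x = 1) (hTΩ : T ⊆ Ω) (hTne : T.Nonempty) :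
    ContinuousOn v (closure Ω) ∧
      (∀ x ∈ Ω, 0 < v x ∧ v x ≤ Λ * infDist x (frontier Ω)) ∧
      (∀ x ∈ frontier Ω, v x = 0) ∧ (∀ x ∈ T, v x = 1) ∧ CompCones Ω v ∧
      ∀ x ∈ Ω, Λ * v x ≤ mSubslope v x := by
  set w := fun x => Λ * infDist x (frontier Ω)
  have hw0 : ∀ x ∈ frontier Ω, w x = 0 := fun x hx => by simp [w, infDist_zero_of_mem hx]
  have hnn : ∀ u ∈ S, ∀ x ∈ closure Ω, 0 ≤ u x := fun u hu x hx =>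
    ContinuousWithinAt.closure_le hx continuousWithinAt_const
      ((hcont u hu x hx).mono subset_closure) fun y hy => (hpos u hu y hy).le
  have hglb : ∀ x ∈ closure Ω, IsGLB ((fun u => u x) '' S) (v x) := fun x hx =>
    hv x ▸ isGLB_csInf ⟨_, w, hw, rfl⟩ ⟨0, by rintro _ ⟨u, hu, rfl⟩; exact hnn u hu x hx⟩
  have hvw : ∀ x ∈ closure Ω, v x ≤ w x := fun x hx => (hglb x hx).1 ⟨w, hw, rfl⟩
  have hv0 : ∀ x ∈ closure Ω, 0 ≤ v x := fun x hx =>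
    (hglb x hx).2 (by rintro _ ⟨u, hu, rfl⟩; exact hnn u hu x hx)
  have hvT : ∀ x ∈ T, v x = 1 := fun x hx =>
    (hglb x (subset_closure (hTΩ hx))).unique <| IsLeast.isGLB
      ⟨⟨w, hw, hT w hw x hx⟩, by rintro _ ⟨u, hu, rfl⟩; exact (hT u hu x hx).ge⟩
  obtain ⟨x₀, hx₀⟩ := hTne
  obtain ⟨hvcont, hvpos, hvcc, hvsub⟩ := supersolution_of_isGLB hgeo hΩo hΩc hfr hΛ hpos hle
    (fun u hu => (hcont u hu).mono subset_closure) hcc hsub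
    (fun x hx => hglb x (subset_closure hx)) (hTΩ hx₀) (hvT x₀ hx₀ ▸ one_pos)
  refine ⟨continuousOn_closure_of_le hΩo hvcont (lipschitzWith_mul_infDist hΛ.le _).continuous
      hw0 hv0 hvw, fun x hx => ⟨hvpos x hx, hvw x (subset_closure hx)⟩, fun x hx => ?_,
    hvT, hvcc, hvsub⟩
  exact le_antisymm (hw0 x hx ▸ hvw x (frontier_subset_closure hx))
    (hv0 x (frontier_subset_closure hx))

end Perron

theorem stmt19 {X : Type*} [MetricSpace X] [ProperSpace X] (hgeo : IsGeodesicSpace X)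
    (Ω : Set X) (hΩo : IsOpen Ω) (hΩc : IsConnected Ω) (hΩb : Bornology.IsBounded Ω)
    (hΩne : Ω ≠ Set.univ)
    (R Λ : ℝ)
    (hR : R = sSup ((fun x => Metric.infDist x (frontier Ω)) '' closure Ω))
    (hΛ : Λ = 1 / R)
    (M : Set X) (hM : M = {x ∈ Ω | Metric.infDist x (frontier Ω) = R})
    (S : Set (X → ℝ))
    (hS : S = {u : X → ℝ | LocLipOn Ω u ∧ (∀ x ∈ Ω, 0 < u x) ∧
      ContinuousOn u (closure Ω) ∧ CompCones Ω u ∧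
      (∀ x ∈ Ω, Λ * u x ≤ mSubslope u x) ∧
      (∀ x ∈ M, u x = 1) ∧ (∀ x ∈ closure Ω, u x ≤ 1)})
    (u_inf : X → ℝ) (hu : ∀ x, u_inf x = sInf ((fun u : X → ℝ => u x) '' S)) :
    ContinuousOn u_inf (closure Ω) ∧
      (∀ x ∈ Ω, 0 < u_inf x ∧ u_inf x ≤ Λ * Metric.infDist x (frontier Ω)) ∧
      (∀ x ∈ frontier Ω, u_inf x = 0) ∧
      (∀ x ∈ M, u_inf x = 1) ∧
      CompCones Ω u_inf ∧
      (∀ x ∈ Ω, Λ * u_inf x ≤ mSubslope u_inf x) := by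
  subst hS hM
  obtain ⟨x₀, hx₀⟩ := hΩc.nonempty
  have hfr := hgeo.frontier_nonempty hx₀ hΩne
  obtain ⟨xₕ, hxₕ, hmax⟩ := exists_isGreatest_infDist_frontier hΩo hΩb hfr hx₀
  have hRx : R = infDist xₕ (frontier Ω) := hR ▸ hmax.csSup_eq
  have hR0 : 0 < R := hRx ▸ infDist_frontier_pos hΩo hfr hxₕ
  have hΛ0 : 0 < Λ := hΛ ▸ one_div_pos.2 hR0
  have hwS := mul_infDist_frontier_admissible hgeo hΩo hfr hΛ0
    (by rw [hΛ, one_div_mul_cancel hR0.ne']) fun x hx => hRx ▸ hmax.2 ⟨x, hx, rfl⟩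
  exact perron_infimum hgeo hΩo hΩc.isPreconnected hfr hΛ0 hu hwS
    (fun _ ⟨_, hpos, _⟩ => hpos) (fun _ ⟨_, _, _, _, _, _, hle⟩ x hx => hle x (subset_closure hx))
    (fun _ ⟨_, _, hcont, _⟩ => hcont) (fun _ ⟨_, _, _, hcc, _⟩ => hcc)
    (fun _ ⟨_, _, _, _, hsub, _⟩ => hsub) (fun _ ⟨_, _, _, _, _, hM, _⟩ => hM)
    (fun _ hx => hx.1) ⟨xₕ, hxₕ, hRx.symm⟩
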